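/- Let Z = {z_n} be a sequence of distinct points of D and suppose there exists δ > 0 such that for the particular function f(z) = z/2 one has sup_{n≠m} β(f(z_n),f(z_m))/β(z_n,z_m) ≥ δ·N(f). Then there exists r ∈ (0,1), depending only on δ, such that |z_n| < r for some n; consequently, if Z is sampling for U with constant δ, then Z is R-dense for R = log((1+r)/(1−r)). -/

import Mathlib

open Complex Filter Set

noncomputable section

/-- The open unit disc in the complex plane. -/
def unitD : Set ℂ := {z : ℂ | ‖z‖ < 1}

/-- The pseudohyperbolic distance ρ(z,w) = |z-w| / |1 - conj(w) z|. -/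
def hrho (z w : ℂ) : ℝ := ‖(z - w) / (1 - (starRingEnd ℂ) w * z)‖

/-- The hyperbolic distance β(z,w) = log((1+ρ)/(1-ρ)). -/
def hbeta (z w : ℂ) : ℝ := Real.log ((1 + hrho z w) / (1 - hrho z w))

/-- The hyperbolic disc of center z0 and radius R. -/
def hdisc (z0 : ℂ) (R : ℝ) : Set ℂ := {z : ℂ | z ∈ unitD ∧ hbeta z z0 < R}

/-- N(f) = sup over distinct z,w in the disc of β(f z, f w)/β(z,w). -/
def hN (f : ℂ → ℂ) : ℝ :=
  sSup {x : ℝ | ∃ z ∈ unitD, ∃ w ∈ unitD, z ≠ w ∧ x = hbeta (f z) (f w) / hbeta z w}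

/-- Z is a sampling sequence for U with sampling constant δ. -/
def IsSamplingWith (Z : ℕ → ℂ) (δ : ℝ) : Prop :=
  ∀ f : ℂ → ℂ, DifferentiableOn ℂ f unitD → Set.MapsTo f unitD unitD →
    (∃ z ∈ unitD, ∃ w ∈ unitD, f z ≠ f w) →
    δ * hN f ≤
      sSup {x : ℝ | ∃ n m : ℕ, n ≠ m ∧ x = hbeta (f (Z n)) (f (Z m)) / hbeta (Z n) (Z m)}

lemma mem_unitD {z : ℂ} : z ∈ unitD ↔ ‖z‖ < 1 := Iff.rfl

lemma key_identity (z w : ℂ) :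
    ‖(1 - (starRingEnd ℂ) w * z)‖ ^ 2 - ‖(z - w)‖ ^ 2
      = (1 - ‖z‖ ^ 2) * (1 - ‖w‖ ^ 2) := by
  simp only [Complex.sq_norm, Complex.normSq_apply, Complex.sub_re, Complex.sub_im,
    Complex.one_re, Complex.one_im, Complex.mul_re, Complex.mul_im,
    Complex.conj_re, Complex.conj_im]
  ring

lemma denom_ne {z w : ℂ} (hz : z ∈ unitD) (hw : w ∈ unitD) :
    1 - (starRingEnd ℂ) w * z ≠ 0 := by
  intro h
  have h1 : ‖((starRingEnd ℂ) w * z)‖ < 1 := by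
    rw [norm_mul, Complex.norm_conj]
    calc ‖w‖ * ‖z‖ ≤ 1 * ‖z‖ :=
      mul_le_mul_of_nonneg_right hw.le (norm_nonneg z)
    _ < 1 := by simpa using mem_unitD.mp hz
  have : (starRingEnd ℂ) w * z = 1 := by linear_combination -h
  rw [this] at h1; simp at h1

lemma denom_pos {z w : ℂ} (hz : z ∈ unitD) (hw : w ∈ unitD) :
    0 < ‖(1 - (starRingEnd ℂ) w * z)‖ :=
  norm_pos_iff.mpr (denom_ne hz hw)

lemma hrho_eq (z w : ℂ) :
    hrho z w = ‖(z - w)‖ / ‖(1 - (starRingEnd ℂ) w * z)‖ :=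
  norm_div _ _

lemma hrho_nonneg (z w : ℂ) : 0 ≤ hrho z w := norm_nonneg _

lemma hrho_lt_one {z w : ℂ} (hz : z ∈ unitD) (hw : w ∈ unitD) : hrho z w < 1 := by
  rw [hrho_eq, div_lt_one (denom_pos hz hw)]
  have p1 : 0 < 1 - ‖z‖ ^ 2 := by nlinarith [mem_unitD.mp hz, norm_nonneg z]
  have p2 : 0 < 1 - ‖w‖ ^ 2 := by nlinarith [mem_unitD.mp hw, norm_nonneg w]
  have h2 : ‖(z - w)‖ ^ 2 < ‖(1 - (starRingEnd ℂ) w * z)‖ ^ 2 := by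
    have := mul_pos p1 p2
    nlinarith [key_identity z w]
  exact lt_of_pow_lt_pow_left₀ 2 (norm_nonneg _) h2

lemma hrho_pos {z w : ℂ} (hz : z ∈ unitD) (hw : w ∈ unitD) (hne : z ≠ w) :
    0 < hrho z w := by
  rw [hrho_eq]
  exact div_pos (norm_pos_iff.mpr (sub_ne_zero.mpr hne)) (denom_pos hz hw)

lemma hbeta_pos {z w : ℂ} (hz : z ∈ unitD) (hw : w ∈ unitD) (hne : z ≠ w) :
    0 < hbeta z w := by
  have h1 := hrho_pos hz hw hne
  have h2 := hrho_lt_one hz hw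
  apply Real.log_pos
  rw [lt_div_iff₀ (by linarith)]; linarith

lemma hbeta_nonneg {z w : ℂ} (hz : z ∈ unitD) (hw : w ∈ unitD) : 0 ≤ hbeta z w := by
  have h1 := hrho_nonneg z w
  have h2 := hrho_lt_one hz hw
  apply Real.log_nonneg
  rw [le_div_iff₀ (by linarith)]; linarith

lemma logratio_mono {u v : ℝ} (hu : 0 ≤ u) (huv : u ≤ v) (hv : v < 1) :
    Real.log ((1 + u) / (1 - u)) ≤ Real.log ((1 + v) / (1 - v)) := by
  apply Real.log_le_log (div_pos (by linarith) (by linarith))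
  rw [div_le_div_iff₀ (by linarith) (by linarith)]
  nlinarith

lemma half_mem {z : ℂ} (hz : z ∈ unitD) : z / 2 ∈ unitD := by
  have := mem_unitD.mp hz
  rw [mem_unitD, norm_div, Complex.norm_two]
  linarith

lemma four_ne {z w : ℂ} (hz : z ∈ unitD) (hw : w ∈ unitD) :
    (4 : ℂ) - (starRingEnd ℂ) w * z ≠ 0 := by
  intro h
  have h1 : ‖((starRingEnd ℂ) w * z)‖ < 1 := by
    rw [norm_mul, Complex.norm_conj]
    calc ‖w‖ * ‖z‖ ≤ 1 * ‖z‖ :=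
      mul_le_mul_of_nonneg_right hw.le (norm_nonneg z)
    _ < 1 := by simpa using mem_unitD.mp hz
  have : (starRingEnd ℂ) w * z = 4 := by linear_combination -h
  rw [this] at h1
  norm_num [Complex.norm_ofNat] at h1

lemma hrho_half (z w : ℂ) (hz : z ∈ unitD) (hw : w ∈ unitD) :
    hrho (z / 2) (w / 2)
      = 2 * ‖(z - w)‖ / ‖(4 - (starRingEnd ℂ) w * z)‖ := by
  have h4 := four_ne hz hw
  have key : (z / 2 - w / 2) / (1 - (starRingEnd ℂ) (w / 2) * (z / 2))
      = 2 * (z - w) / (4 - (starRingEnd ℂ) w * z) := by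
    have hd1 : 1 - (starRingEnd ℂ) (w / 2) * (z / 2) ≠ 0 :=
      denom_ne (half_mem hz) (half_mem hw)
    rw [div_eq_div_iff hd1 h4]
    simp only [map_div₀, map_ofNat]
    ring
  rw [hrho, key, norm_div, norm_mul, Complex.norm_two]

-- abs of conj w * z real part bound packaging
lemma normSq_sub' (z w : ℂ) : ‖(z - w)‖ ^ 2
    = ‖z‖ ^ 2 + ‖w‖ ^ 2 - 2 * ((starRingEnd ℂ) w * z).re := by
  simp only [Complex.sq_norm, Complex.normSq_apply, Complex.sub_re, Complex.sub_im,
    Complex.mul_re, Complex.mul_im, Complex.conj_re, Complex.conj_im]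
  ring

lemma normSq_four (z w : ℂ) : ‖(4 - (starRingEnd ℂ) w * z)‖ ^ 2
    = 16 - 8 * ((starRingEnd ℂ) w * z).re + ‖z‖ ^ 2 * ‖w‖ ^ 2 := by
  simp only [Complex.sq_norm, Complex.normSq_apply, Complex.sub_re, Complex.sub_im,
    Complex.mul_re, Complex.mul_im, Complex.conj_re, Complex.conj_im]
  norm_num
  ring

lemma re_ge (z w : ℂ) : -(‖z‖ * ‖w‖) ≤ ((starRingEnd ℂ) w * z).re := by
  have h1 := Complex.abs_re_le_norm ((starRingEnd ℂ) w * z)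
  have h2 := abs_le.mp h1
  rw [norm_mul, Complex.norm_conj] at h2
  nlinarith [h2.1]

/-- ρ(z/2, w/2) ≤ 4/5. -/
lemma hrho_half_le (z w : ℂ) (hz : z ∈ unitD) (hw : w ∈ unitD) :
    hrho (z / 2) (w / 2) ≤ 4 / 5 := by
  rw [hrho_half z w hz hw, div_le_iff₀ (norm_pos_iff.mpr (four_ne hz hw))]
  have ha := mem_unitD.mp hz
  have hb := mem_unitD.mp hw
  have ha0 := norm_nonneg z
  have hb0 := norm_nonneg w
  have h1 := normSq_sub' z w
  have h2 := normSq_four z w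
  have h3 := re_ge z w
  have hE := norm_nonneg (4 - (starRingEnd ℂ) w * z)
  have hZ := norm_nonneg (z - w)
  have key : (2 * ‖(z - w)‖) ^ 2 ≤ (4 / 5 * ‖(4 - (starRingEnd ℂ) w * z)‖) ^ 2 := by
    nlinarith [mul_nonneg ha0 hb0, sq_nonneg (‖z‖ - ‖w‖),
      mul_nonneg (mul_nonneg ha0 hb0) (mul_nonneg ha0 hb0),
      mul_nonneg (sub_nonneg.mpr ha.le) (sub_nonneg.mpr hb.le)]
  nlinarith [key]

/-- Schwarz–Pick for f(z)=z/2 : ρ(z/2,w/2) ≤ ρ(z,w). -/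
lemma hrho_half_le_hrho (z w : ℂ) (hz : z ∈ unitD) (hw : w ∈ unitD) :
    hrho (z / 2) (w / 2) ≤ hrho z w := by
  rw [hrho_half z w hz hw, hrho_eq,
    div_le_div_iff₀ (norm_pos_iff.mpr (four_ne hz hw)) (denom_pos hz hw)]
  have hZ := norm_nonneg (z - w)
  have hA := norm_nonneg (1 - (starRingEnd ℂ) w * z)
  have hE := norm_nonneg (4 - (starRingEnd ℂ) w * z)
  have key : 2 * ‖(1 - (starRingEnd ℂ) w * z)‖
      ≤ ‖(4 - (starRingEnd ℂ) w * z)‖ := by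
    have h2 := normSq_four z w
    have h1 : ‖(1 - (starRingEnd ℂ) w * z)‖ ^ 2
        = 1 - 2 * ((starRingEnd ℂ) w * z).re + ‖z‖ ^ 2 * ‖w‖ ^ 2 := by
      simp only [Complex.sq_norm, Complex.normSq_apply, Complex.sub_re, Complex.sub_im,
        Complex.one_re, Complex.one_im, Complex.mul_re, Complex.mul_im,
        Complex.conj_re, Complex.conj_im]
      ring
    have hq : ‖z‖ ^ 2 * ‖w‖ ^ 2 ≤ 1 := by
      have ha := mem_unitD.mp hz
      have hb := mem_unitD.mp hw
      have ha0 := norm_nonneg z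
      have hb0 := norm_nonneg w
      have h5 : ‖z‖ ^ 2 ≤ 1 := by nlinarith
      have h6 : ‖w‖ ^ 2 ≤ 1 := by nlinarith
      exact mul_le_one₀ h5 (sq_nonneg _) h6
    nlinarith
  nlinarith

lemma hbeta_half_le_hbeta (z w : ℂ) (hz : z ∈ unitD) (hw : w ∈ unitD) :
    hbeta (z / 2) (w / 2) ≤ hbeta z w :=
  logratio_mono (hrho_nonneg _ _) (hrho_half_le_hrho z w hz hw) (hrho_lt_one hz hw)

/-- log((1+s)/(1-s)) ≤ 10 s for 0 ≤ s ≤ 4/5. -/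
lemma logratio_le (s : ℝ) (hs0 : 0 ≤ s) (hs : s ≤ 4 / 5) :
    Real.log ((1 + s) / (1 - s)) ≤ 10 * s := by
  have h1 : Real.log (1 + s) ≤ s := by
    have := Real.log_le_sub_one_of_pos (x := 1 + s) (by linarith)
    linarith
  have h2 : -(5 * s) ≤ Real.log (1 - s) := by
    have h3 := Real.log_le_sub_one_of_pos (x := (1 - s)⁻¹) (inv_pos.mpr (by linarith))
    rw [Real.log_inv] at h3
    have h4 : (1 - s)⁻¹ - 1 ≤ 5 * s := by
      rw [inv_eq_one_div, div_sub' (by linarith : (1:ℝ) - s ≠ 0), div_le_iff₀ (by linarith)]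
      nlinarith
    linarith
  rw [Real.log_div (by linarith) (by linarith)]
  linarith

/-- t ≤ log((1+t)/(1-t)) for 0 ≤ t < 1. -/
lemma le_logratio (t : ℝ) (ht0 : 0 ≤ t) (ht : t < 1) :
    t ≤ Real.log ((1 + t) / (1 - t)) := by
  have h1 : 0 ≤ Real.log (1 + t) := Real.log_nonneg (by linarith)
  have h2 : Real.log (1 - t) ≤ -t := by
    have := Real.log_le_sub_one_of_pos (x := 1 - t) (by linarith)
    linarith
  rw [Real.log_div (by linarith) (by linarith)]
  linarith

set_option maxHeartbeats 1000000 in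
/-- Core estimate: for ε ∈ (0,1] there is r < 1 such that if |z|,|w| ≥ r then
β(z/2,w/2) ≤ ε β(z,w). -/
lemma coreE (ε : ℝ) (hε : 0 < ε) (hε1 : ε ≤ 1) :
    ∃ r : ℝ, 0 < r ∧ r < 1 ∧ ∀ z w : ℂ, z ∈ unitD → w ∈ unitD →
      r ≤ ‖z‖ → r ≤ ‖w‖ →
      hbeta (z / 2) (w / 2) ≤ ε * hbeta z w := by
  set K : ℝ := Real.exp (Real.log 9 / ε) with hK
  have hlog9 : 0 < Real.log 9 := Real.log_pos (by norm_num)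
  have hK1 : 1 < K := by
    rw [hK]
    have : 0 < Real.log 9 / ε := div_pos hlog9 hε
    calc (1:ℝ) = Real.exp 0 := Real.exp_zero.symm
    _ < K := Real.exp_lt_exp.mpr this
  set t₀ : ℝ := (K - 1) / (K + 1) with ht₀def
  have hKp : (0:ℝ) < K + 1 := by linarith
  have ht₀0 : 0 < t₀ := div_pos (by linarith) hKp
  have ht₀1 : t₀ < 1 := by rw [div_lt_one hKp]; linarith
  have hrt : 0 < 3 / 40 * ε * (1 - t₀) := by
    apply mul_pos (by positivity) (by linarith)
  refine ⟨max (1/2) (1 - 3 / 40 * ε * (1 - t₀)),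
    lt_of_lt_of_le (by norm_num) (le_max_left _ _), ?_, ?_⟩
  · apply max_lt (by norm_num) (by linarith)
  intro z w hz hw hrz hrw
  set r : ℝ := max (1/2) (1 - 3 / 40 * ε * (1 - t₀)) with hrdef
  have hr1 : 1 - r ≤ 3 / 40 * ε * (1 - t₀) := by
    have := le_max_right (1/2 : ℝ) (1 - 3 / 40 * ε * (1 - t₀))
    linarith
  set t : ℝ := hrho z w with htdef
  set s : ℝ := hrho (z / 2) (w / 2) with hsdef
  have ht0 : 0 ≤ t := hrho_nonneg z w
  have ht1 : t < 1 := hrho_lt_one hz hw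
  have hs0 : 0 ≤ s := hrho_nonneg _ _
  have hs45 : s ≤ 4 / 5 := hrho_half_le z w hz hw
  rcases le_or_gt t₀ t with hcase | hcase
  · -- large t: β(z,w) ≥ log 9 / ε, β(z/2,w/2) ≤ log 9
    have hβ1 : hbeta (z / 2) (w / 2) ≤ Real.log 9 := by
      have := logratio_mono hs0 hs45 (by norm_num : (4:ℝ)/5 < 1)
      have h9 : ((1:ℝ) + 4/5) / (1 - 4/5) = 9 := by norm_num
      rw [h9] at this
      exact this
    have hβ2 : Real.log 9 / ε ≤ hbeta z w := by
      have hm := logratio_mono ht₀0.le hcase ht1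
      have hval : (1 + t₀) / (1 - t₀) = K := by
        rw [ht₀def]
        field_simp
        ring
      rw [hval, hK, Real.log_exp] at hm
      exact hm
    rw [div_le_iff₀ hε] at hβ2
    calc hbeta (z / 2) (w / 2) ≤ Real.log 9 := hβ1
    _ ≤ ε * hbeta z w := by linarith [hβ2]
  · -- small t
    have hA : 0 < ‖(1 - (starRingEnd ℂ) w * z)‖ := denom_pos hz hw
    have hE3 : (3:ℝ) ≤ ‖(4 - (starRingEnd ℂ) w * z)‖ := by
      have htr : ‖(4:ℂ)‖ - ‖((starRingEnd ℂ) w * z)‖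
          ≤ ‖((4:ℂ) - (starRingEnd ℂ) w * z)‖ := by
        have := norm_sub_norm_le (4:ℂ) ((starRingEnd ℂ) w * z)
        exact this
      have h4 : ‖(4 : ℂ)‖ = 4 := by norm_num [Complex.norm_ofNat]
      have hm : ‖((starRingEnd ℂ) w * z)‖ ≤ 1 := by
        rw [norm_mul, Complex.norm_conj]
        exact mul_le_one₀ (mem_unitD.mp hw).le (norm_nonneg z) (mem_unitD.mp hz).le
      rw [h4] at htr
      linarith
    -- |z - w| = t * A
    have hzw : ‖(z - w)‖ = t * ‖(1 - (starRingEnd ℂ) w * z)‖ := by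
      rw [htdef, hrho_eq, div_mul_cancel₀]
      exact hA.ne'
    -- bound on A
    have hAb : ‖(1 - (starRingEnd ℂ) w * z)‖ * (1 - t₀) ≤ 2 * (1 - r) := by
      have hid := key_identity z w
      have h1a : 1 - ‖z‖ ^ 2 ≤ 1 - r ^ 2 := by
        have : r ^ 2 ≤ ‖z‖ ^ 2 := by
          apply pow_le_pow_left₀ (by positivity) hrz
        linarith
      have h1b : 1 - ‖w‖ ^ 2 ≤ 1 - r ^ 2 := by
        have : r ^ 2 ≤ ‖w‖ ^ 2 := by
          apply pow_le_pow_left₀ (by positivity) hrw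
        linarith
      have hr0 : (0:ℝ) < r := by rw [hrdef]; positivity
      have hrlt1 : r < 1 := by
        rw [hrdef]; apply max_lt (by norm_num) (by linarith)
      have h1r : 0 ≤ 1 - r ^ 2 := by nlinarith
      have hsq : (‖(1 - (starRingEnd ℂ) w * z)‖ * (1 - t₀)) ^ 2 ≤ (2 * (1 - r)) ^ 2 := by
        have e1 : ‖(1 - (starRingEnd ℂ) w * z)‖ ^ 2 * (1 - t ^ 2)
            = (1 - ‖z‖ ^ 2) * (1 - ‖w‖ ^ 2) := by
          have ht2 : t ^ 2 * ‖(1 - (starRingEnd ℂ) w * z)‖ ^ 2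
              = ‖(z - w)‖ ^ 2 := by
            rw [htdef, hrho_eq, div_pow, div_mul_cancel₀ _ (pow_ne_zero 2 hA.ne')]
          linear_combination key_identity z w - ht2
        have e2 : (1 - t₀) ^ 2 ≤ 1 - t ^ 2 := by nlinarith
        have e3 : (1 - ‖z‖ ^ 2) * (1 - ‖w‖ ^ 2) ≤ (1 - r ^ 2) ^ 2 := by
          have hza : 0 ≤ 1 - ‖z‖ ^ 2 := by
            have := mem_unitD.mp hz; nlinarith [norm_nonneg z]
          nlinarith
        have e4 : (1 - r ^ 2) ^ 2 ≤ (2 * (1 - r)) ^ 2 := by nlinarith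
        calc (‖(1 - (starRingEnd ℂ) w * z)‖ * (1 - t₀)) ^ 2
            = ‖(1 - (starRingEnd ℂ) w * z)‖ ^ 2 * (1 - t₀) ^ 2 := by ring
        _ ≤ ‖(1 - (starRingEnd ℂ) w * z)‖ ^ 2 * (1 - t ^ 2) := by
            apply mul_le_mul_of_nonneg_left e2 (sq_nonneg _)
        _ = (1 - ‖z‖ ^ 2) * (1 - ‖w‖ ^ 2) := e1
        _ ≤ (1 - r ^ 2) ^ 2 := e3
        _ ≤ (2 * (1 - r)) ^ 2 := e4
      have hnn : 0 ≤ ‖(1 - (starRingEnd ℂ) w * z)‖ * (1 - t₀) := by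
        apply mul_nonneg hA.le; linarith
      nlinarith [hsq, hnn]
    have hAle : ‖(1 - (starRingEnd ℂ) w * z)‖ ≤ 3 / 20 * ε := by
      have h2 : 0 < 1 - t₀ := by linarith
      rw [← mul_le_mul_iff_of_pos_right h2]
      nlinarith [hAb, hr1, h2]
    -- s ≤ (2/3) t A
    have hsle : s ≤ 2 / 3 * (t * ‖(1 - (starRingEnd ℂ) w * z)‖) := by
      rw [hsdef, hrho_half z w hz hw, hzw]
      rw [div_le_iff₀ (by linarith : (0:ℝ) < ‖(4 - (starRingEnd ℂ) w * z)‖)]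
      have hnn : 0 ≤ t * ‖(1 - (starRingEnd ℂ) w * z)‖ := mul_nonneg ht0 hA.le
      nlinarith
    have hst : 10 * s ≤ ε * t := by
      have : s ≤ 2 / 3 * (t * (3 / 20 * ε)) := by
        calc s ≤ 2 / 3 * (t * ‖(1 - (starRingEnd ℂ) w * z)‖) := hsle
        _ ≤ 2 / 3 * (t * (3 / 20 * ε)) := by
            apply mul_le_mul_of_nonneg_left _ (by norm_num)
            exact mul_le_mul_of_nonneg_left hAle ht0
      nlinarith
    calc hbeta (z / 2) (w / 2) ≤ 10 * s := logratio_le s hs0 hs45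
    _ ≤ ε * t := hst
    _ ≤ ε * hbeta z w := by
        apply mul_le_mul_of_nonneg_left _ hε.le
        exact le_logratio t ht0 ht1

lemma half_mem' {z : ℂ} (hz : z ∈ unitD) : (fun z => z / 2) z ∈ unitD := half_mem hz

lemma zero_mem : (0 : ℂ) ∈ unitD := by simp [unitD]

lemma halfc_mem : ((1:ℂ)/2) ∈ unitD := by
  rw [mem_unitD, norm_div]
  simp [Complex.norm_two]
  norm_num

/-- the testing constant c₀ -/
def c₀ : ℝ := hbeta ((1:ℂ)/2/2) (0/2) / hbeta ((1:ℂ)/2) 0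

lemma c₀_pos : 0 < c₀ := by
  apply div_pos
  · apply hbeta_pos (half_mem halfc_mem) (half_mem zero_mem)
    norm_num
  · exact hbeta_pos halfc_mem zero_mem (by norm_num)

lemma hN_half_set_bdd :
    ∀ x ∈ {x : ℝ | ∃ z ∈ unitD, ∃ w ∈ unitD, z ≠ w ∧
      x = hbeta ((fun z => z / 2) z) ((fun z => z / 2) w) / hbeta z w}, x ≤ 1 := by
  rintro x ⟨z, hz, w, hw, hne, rfl⟩
  rw [div_le_one (hbeta_pos hz hw hne)]
  exact hbeta_half_le_hbeta z w hz hw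

lemma c₀_le_hN : c₀ ≤ hN (fun z => z / 2) := by
  apply le_csSup ⟨1, fun x hx => hN_half_set_bdd x hx⟩
  exact ⟨(1:ℂ)/2, halfc_mem, 0, zero_mem, by norm_num, rfl⟩

lemma main1 (δ : ℝ) (hδ : 0 < δ) :
    ∃ r : ℝ, 0 < r ∧ r < 1 ∧
      ∀ Z : ℕ → ℂ, Function.Injective Z → (∀ n, Z n ∈ unitD) →
        (δ * hN (fun z => z / 2) ≤ sSup {x : ℝ | ∃ n m : ℕ, n ≠ m ∧
            x = hbeta (Z n / 2) (Z m / 2) / hbeta (Z n) (Z m)}) →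
        ∃ n, ‖(Z n)‖ < r := by
  set ε : ℝ := min 1 (δ * c₀ / 2) with hεdef
  have hε0 : 0 < ε := lt_min one_pos (div_pos (mul_pos hδ c₀_pos) two_pos)
  have hε1 : ε ≤ 1 := min_le_left _ _
  obtain ⟨r, hr0, hr1, hr⟩ := coreE ε hε0 hε1
  refine ⟨r, hr0, hr1, ?_⟩
  intro Z hinj hmem H
  by_contra hcon
  push_neg at hcon
  set S : Set ℝ := {x : ℝ | ∃ n m : ℕ, n ≠ m ∧
    x = hbeta (Z n / 2) (Z m / 2) / hbeta (Z n) (Z m)} with hSdef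
  have hSne : S.Nonempty := ⟨_, 0, 1, by norm_num, rfl⟩
  have hSle : ∀ x ∈ S, x ≤ ε := by
    rintro x ⟨n, m, hnm, rfl⟩
    have hne : Z n ≠ Z m := fun h => hnm (hinj h)
    rw [div_le_iff₀ (hbeta_pos (hmem n) (hmem m) hne)]
    exact hr (Z n) (Z m) (hmem n) (hmem m) (hcon n) (hcon m)
  have hsup : sSup S ≤ ε := csSup_le hSne hSle
  have h1 : δ * c₀ ≤ δ * hN (fun z => z / 2) :=
    mul_le_mul_of_nonneg_left c₀_le_hN hδ.le
  have h2 : ε ≤ δ * c₀ / 2 := min_le_right _ _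
  have h3 : 0 < δ * c₀ := mul_pos hδ c₀_pos
  linarith [H, hsup, h1, h2, h3]

/-- the Möbius involution sending z0 to 0 -/
def phi (z0 z : ℂ) : ℂ := (z0 - z) / (1 - (starRingEnd ℂ) z0 * z)

lemma phi_mem {z0 z : ℂ} (hz0 : z0 ∈ unitD) (hz : z ∈ unitD) : phi z0 z ∈ unitD := by
  rw [phi, mem_unitD, norm_div, div_lt_one (denom_pos hz hz0)]
  have hid := key_identity z z0
  have p1 : 0 < 1 - ‖z‖ ^ 2 := by
    nlinarith [mem_unitD.mp hz, norm_nonneg z]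
  have p2 : 0 < 1 - ‖z0‖ ^ 2 := by
    nlinarith [mem_unitD.mp hz0, norm_nonneg z0]
  have h2 : ‖(z - z0)‖ ^ 2 < ‖(1 - (starRingEnd ℂ) z0 * z)‖ ^ 2 := by
    nlinarith [mul_pos p1 p2]
  have h3 : ‖(z0 - z)‖ = ‖(z - z0)‖ := by
    rw [← neg_sub, norm_neg]
  rw [h3]
  exact lt_of_pow_lt_pow_left₀ 2 (norm_nonneg _) h2

lemma phi_invol {z0 z : ℂ} (hz0 : z0 ∈ unitD) (hz : z ∈ unitD) :
    phi z0 (phi z0 z) = z := by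
  have h1 : 1 - (starRingEnd ℂ) z0 * z ≠ 0 := denom_ne hz hz0
  have h2 : 1 - (starRingEnd ℂ) z0 * z0 ≠ 0 := denom_ne hz0 hz0
  have hD2 : 1 - (starRingEnd ℂ) z0 * ((z0 - z) / (1 - (starRingEnd ℂ) z0 * z))
      = (1 - (starRingEnd ℂ) z0 * z0) / (1 - (starRingEnd ℂ) z0 * z) := by
    field_simp
    ring
  rw [phi, phi, hD2]
  rw [div_eq_iff (div_ne_zero h2 h1)]
  rw [sub_div' h1, mul_div_assoc', div_eq_div_iff h1 h1]
  ring

lemma phi_inj {z0 z w : ℂ} (hz0 : z0 ∈ unitD) (hz : z ∈ unitD) (hw : w ∈ unitD)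
    (h : phi z0 z = phi z0 w) : z = w := by
  have := congrArg (phi z0) h
  rwa [phi_invol hz0 hz, phi_invol hz0 hw] at this

lemma phi_iso {z0 z w : ℂ} (hz0 : z0 ∈ unitD) (hz : z ∈ unitD) (hw : w ∈ unitD) :
    hrho (phi z0 z) (phi z0 w) = hrho z w := by
  have hA : 1 - (starRingEnd ℂ) z0 * z ≠ 0 := denom_ne hz hz0
  have hB : 1 - (starRingEnd ℂ) z0 * w ≠ 0 := denom_ne hw hz0
  have hBc : 1 - z0 * (starRingEnd ℂ) w ≠ 0 := by
    intro h
    apply hB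
    have := congrArg (starRingEnd ℂ) h
    simpa [map_sub, map_mul, Complex.conj_conj] using this
  have hwz : 1 - (starRingEnd ℂ) w * z ≠ 0 := denom_ne hz hw
  have hk : 1 - (starRingEnd ℂ) z0 * z0 ≠ 0 := denom_ne hz0 hz0
  have e1 : phi z0 z - phi z0 w
      = (w - z) * (1 - (starRingEnd ℂ) z0 * z0)
        / ((1 - (starRingEnd ℂ) z0 * z) * (1 - (starRingEnd ℂ) z0 * w)) := by
    rw [phi, phi]
    rw [div_sub_div _ _ hA hB, div_eq_div_iff (mul_ne_zero hA hB) (mul_ne_zero hA hB)]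
    ring
  have e2 : 1 - (starRingEnd ℂ) (phi z0 w) * phi z0 z
      = (1 - (starRingEnd ℂ) w * z) * (1 - (starRingEnd ℂ) z0 * z0)
        / ((1 - z0 * (starRingEnd ℂ) w) * (1 - (starRingEnd ℂ) z0 * z)) := by
    rw [phi, phi, map_div₀, map_sub, map_sub, map_mul, map_one, Complex.conj_conj]
    rw [div_mul_div_comm, one_sub_div (mul_ne_zero hBc hA), div_eq_div_iff (mul_ne_zero hBc hA) (mul_ne_zero hBc hA)]
    ring
  have e3 : (w - z) * (1 - (starRingEnd ℂ) z0 * z0)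
        / ((1 - (starRingEnd ℂ) z0 * z) * (1 - (starRingEnd ℂ) z0 * w))
      / ((1 - (starRingEnd ℂ) w * z) * (1 - (starRingEnd ℂ) z0 * z0)
        / ((1 - z0 * (starRingEnd ℂ) w) * (1 - (starRingEnd ℂ) z0 * z)))
      = ((w - z) / (1 - (starRingEnd ℂ) w * z))
        * ((1 - z0 * (starRingEnd ℂ) w) / (1 - (starRingEnd ℂ) z0 * w)) := by
    rw [div_div_div_eq, div_mul_div_comm, div_eq_div_iff (mul_ne_zero (mul_ne_zero hA hB) (mul_ne_zero hwz hk)) (mul_ne_zero hwz hB)]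
    ring
  rw [hrho, e1, e2, e3, norm_mul, norm_div, norm_div]
  have habs : ‖(1 - z0 * (starRingEnd ℂ) w)‖
      = ‖(1 - (starRingEnd ℂ) z0 * w)‖ := by
    rw [show (1 : ℂ) - z0 * (starRingEnd ℂ) w
        = (starRingEnd ℂ) (1 - (starRingEnd ℂ) z0 * w) by
      simp [map_sub, map_mul, Complex.conj_conj]]
    exact Complex.norm_conj _
  rw [habs, div_self (norm_ne_zero_iff.mpr hB), mul_one]
  rw [hrho, norm_div, ← neg_sub z w, norm_neg]

lemma hbeta_phi {z0 z w : ℂ} (hz0 : z0 ∈ unitD) (hz : z ∈ unitD) (hw : w ∈ unitD) :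
    hbeta (phi z0 z) (phi z0 w) = hbeta z w := by
  rw [hbeta, hbeta, phi_iso hz0 hz hw]

/-- Testing the sampling inequality on f(z) = z/2 forces some point of the sequence to
lie in a compact part of the disc; consequently a sampling sequence with constant δ is
R-dense for a suitable R. -/
theorem sampling_necessity_density (δ : ℝ) (hδ : 0 < δ) :
    ∃ r : ℝ, 0 < r ∧ r < 1 ∧
      ∀ Z : ℕ → ℂ, Function.Injective Z → (∀ n, Z n ∈ unitD) →
        (δ * hN (fun z => z / 2) ≤
          sSup {x : ℝ | ∃ n m : ℕ, n ≠ m ∧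
            x = hbeta (Z n / 2) (Z m / 2) / hbeta (Z n) (Z m)}) →
        (∃ n, ‖(Z n)‖ < r) ∧
        (IsSamplingWith Z δ →
          ∀ z ∈ unitD, ∃ n, Z n ∈ hdisc z (Real.log ((1 + r) / (1 - r)))) := by
  obtain ⟨r, hr0, hr1, hr⟩ := main1 δ hδ
  refine ⟨r, hr0, hr1, ?_⟩
  intro Z hinj hmem H
  refine ⟨hr Z hinj hmem H, ?_⟩
  intro hs z0 hz0
  have hgd : DifferentiableOn ℂ (fun z => phi z0 z / 2) unitD := by
    simp only [phi]
    apply DifferentiableOn.div_const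
    apply DifferentiableOn.div
    · exact ((differentiable_const z0).sub differentiable_id).differentiableOn
    · exact ((differentiable_const (1:ℂ)).sub
        ((differentiable_const _).mul differentiable_id)).differentiableOn
    · intro z hz; exact denom_ne hz hz0
  have hgm : Set.MapsTo (fun z => phi z0 z / 2) unitD unitD := by
    intro z hz
    exact half_mem (phi_mem hz0 hz)
  have hgnc : ∃ z ∈ unitD, ∃ w ∈ unitD,
      (fun z => phi z0 z / 2) z ≠ (fun z => phi z0 z / 2) w := by
    refine ⟨0, zero_mem, 1/2, halfc_mem, ?_⟩
    simp only
    intro h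
    have h2 : phi z0 0 = phi z0 (1/2) := by
      have := congrArg (fun x : ℂ => x * 2) h
      simpa [div_mul_cancel₀] using this
    have := phi_inj hz0 zero_mem halfc_mem h2
    norm_num at this
  have Hg := hs (fun z => phi z0 z / 2) hgd hgm hgnc
  -- identify the two hN's
  have hNeq : hN (fun z => phi z0 z / 2) = hN (fun z => z / 2) := by
    unfold hN
    congr 1
    ext x
    constructor
    · rintro ⟨z, hz, w, hw, hne, rfl⟩
      refine ⟨phi z0 z, phi_mem hz0 hz, phi z0 w, phi_mem hz0 hw,
        fun h => hne (phi_inj hz0 hz hw h), ?_⟩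
      simp only
      rw [hbeta_phi hz0 hz hw]
    · rintro ⟨u, hu, v, hv, hne, rfl⟩
      refine ⟨phi z0 u, phi_mem hz0 hu, phi z0 v, phi_mem hz0 hv,
        fun h => hne (phi_inj hz0 hu hv h), ?_⟩
      simp only
      rw [phi_invol hz0 hu, phi_invol hz0 hv, hbeta_phi hz0 hu hv]
  -- identify the sup sets
  have hSeq : {x : ℝ | ∃ n m : ℕ, n ≠ m ∧
        x = hbeta ((fun z => phi z0 z / 2) (Z n)) ((fun z => phi z0 z / 2) (Z m))
          / hbeta (Z n) (Z m)}
      = {x : ℝ | ∃ n m : ℕ, n ≠ m ∧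
        x = hbeta ((fun k => phi z0 (Z k)) n / 2) ((fun k => phi z0 (Z k)) m / 2)
          / hbeta ((fun k => phi z0 (Z k)) n) ((fun k => phi z0 (Z k)) m)} := by
    ext x
    constructor
    · rintro ⟨n, m, hnm, rfl⟩
      exact ⟨n, m, hnm, by simp only; rw [hbeta_phi hz0 (hmem n) (hmem m)]⟩
    · rintro ⟨n, m, hnm, rfl⟩
      exact ⟨n, m, hnm, by simp only; rw [hbeta_phi hz0 (hmem n) (hmem m)]⟩
  rw [hNeq, hSeq] at Hg
  have hWinj : Function.Injective (fun k => phi z0 (Z k)) := by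
    intro a b h
    exact hinj (phi_inj hz0 (hmem a) (hmem b) h)
  have hWmem : ∀ n, (fun k => phi z0 (Z k)) n ∈ unitD := fun n => phi_mem hz0 (hmem n)
  obtain ⟨n, hn⟩ := hr (fun k => phi z0 (Z k)) hWinj hWmem Hg
  have hρ : hrho (Z n) z0 = ‖(phi z0 (Z n))‖ := by
    rw [hrho, phi, show (Z n - z0) / (1 - (starRingEnd ℂ) z0 * Z n)
      = -((z0 - Z n) / (1 - (starRingEnd ℂ) z0 * Z n)) by ring, norm_neg]
  have hρr : hrho (Z n) z0 < r := by rw [hρ]; exact hn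
  have hρ0 : 0 ≤ hrho (Z n) z0 := hrho_nonneg _ _
  refine ⟨n, hmem n, ?_⟩
  show Real.log ((1 + hrho (Z n) z0) / (1 - hrho (Z n) z0)) < Real.log ((1 + r) / (1 - r))
  apply Real.log_lt_log (div_pos (by linarith) (by linarith))
  rw [div_lt_div_iff₀ (by linarith) (by linarith)]
  nlinarith
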